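/- There exists ε₀ ∈ (0,1) such that for all reals ε₁, ε₂ with 0 < ε₁ ≤ ε₂/16 and ε₂ ≤ ε₀, every θ ∈ ℝ and every ξ ∈ 𝔻 with |ξ| ≥ 1/4: if 8·ε₂⁻¹·|sin(θ/2)| ≤ 1−|ξ|² ≤ (1/2)·ε₁⁻¹·|sin(θ/2)|, then the Poincaré distance d_P(ξ, e^{iθ}ξ) lies in the closed interval [ε₁, ε₂]. -/

import Mathlib

/-- The inverse hyperbolic tangent. -/
noncomputable def artanh (x : ℝ) : ℝ := Real.log ((1 + x) / (1 - x)) / 2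

/-- The Poincaré distance on the unit disc. -/
noncomputable def dP (z w : ℂ) : ℝ :=
  2 * artanh (‖z - w‖ / ‖1 - (starRingEnd ℂ) w * z‖)

/-! For `‖w‖ = 1` one has `‖1 - conj (w ξ) ξ‖² = (1 - ‖ξ‖²)² + (‖1 - w‖ ‖ξ‖)²`, so
`tanh (d_P(ξ, wξ) / 2) = a / √(1 + a²)` with `a = ‖1 - w‖ ‖ξ‖ / (1 - ‖ξ‖²)`, i.e.
`d_P(ξ, wξ) = 2 arsinh a`. For `w = e^{iθ}`, `‖1 - w‖ = 2 |sin (θ/2)|`, and the hypotheses (with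
`‖ξ‖ ≥ 1/4` for the lower bound) place `a` in `[ε₁, ε₂/4]`; since `a - a²/2 ≤ arsinh a ≤ a`,
`2 arsinh a` lies in `[a, 2a]` when `a ≤ 1`. -/

open ComplexConjugate

lemma artanh_eq_real_artanh {t : ℝ} (ht : t ∈ Set.Icc (-1) 1) : artanh t = Real.artanh t := by
  rw [Real.artanh_eq_half_log ht, artanh, one_div_mul_eq_div]

lemma artanh_div_sqrt_one_add_sq (x : ℝ) : artanh (x / √(1 + x ^ 2)) = Real.arsinh x := by
  rw [← Real.tanh_arsinh, artanh_eq_real_artanh, Real.artanh_tanh]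
  exact ⟨(Real.neg_one_lt_tanh _).le, (Real.tanh_lt_one _).le⟩

lemma artanh_div_sqrt_sq_add_sq {δ : ℝ} (hδ : 0 < δ) (a : ℝ) :
    artanh (a / √(δ ^ 2 + a ^ 2)) = Real.arsinh (a / δ) := by
  have : √(δ ^ 2 + a ^ 2) = δ * √(1 + (a / δ) ^ 2) := by
    rw [← Real.sqrt_sq hδ.le, ← Real.sqrt_mul (sq_nonneg _), Real.sqrt_sq hδ.le]
    congr 1
    field_simp
  rw [this, ← div_div, artanh_div_sqrt_one_add_sq]

lemma Real.sub_sq_div_two_le_arsinh (x : ℝ) : x - x ^ 2 / 2 ≤ Real.arsinh x := by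
  have hpos : 0 < x + √(1 + x ^ 2) := by
    nlinarith [Real.sqrt_nonneg (1 + x ^ 2), Real.sq_sqrt (by positivity : (0:ℝ) ≤ 1 + x ^ 2),
      sq_nonneg (x + √(1 + x ^ 2))]
  -- `log y ≥ 1 - y⁻¹` at `y = x + √(1 + x²)`, whose inverse is `√(1 + x²) - x`
  have hinv : (x + √(1 + x ^ 2))⁻¹ = √(1 + x ^ 2) - x := by
    rw [inv_eq_iff_eq_inv, eq_comm, inv_eq_of_mul_eq_one_left]
    nlinarith [Real.sq_sqrt (by positivity : (0:ℝ) ≤ 1 + x ^ 2)]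
  have hsqrt : √(1 + x ^ 2) ≤ 1 + x ^ 2 / 2 := by
    rw [Real.sqrt_le_left (by positivity)]
    nlinarith [sq_nonneg x]
  have := Real.one_sub_inv_le_log_of_pos hpos
  rw [Real.arsinh]
  linarith

lemma Real.arsinh_le_self {x : ℝ} (hx : 0 ≤ x) : Real.arsinh x ≤ x := by
  rw [← Real.sinh_le_sinh, Real.sinh_arsinh]
  exact Real.self_le_sinh_iff.mpr hx

lemma norm_one_sub_conj_mul_mul_self_sq {w : ℂ} (hw : ‖w‖ = 1) (ξ : ℂ) :
    ‖1 - conj (w * ξ) * ξ‖ ^ 2 = (1 - ‖ξ‖ ^ 2) ^ 2 + (‖1 - w‖ * ‖ξ‖) ^ 2 := by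
  have hw' : w.re * w.re + w.im * w.im = 1 := by
    rw [← Complex.normSq_apply, ← Complex.sq_norm, hw, one_pow]
  simp only [mul_pow, Complex.sq_norm, Complex.normSq_apply, map_mul, Complex.sub_re,
    Complex.one_re, Complex.mul_re, Complex.conj_re, Complex.conj_im, mul_neg, neg_mul, neg_neg,
    Complex.mul_im, Complex.sub_im, Complex.one_im, zero_sub, neg_add_rev]
  linear_combination ((ξ.re * ξ.re + ξ.im * ξ.im) ^ 2 - (ξ.re * ξ.re + ξ.im * ξ.im)) * hw'

lemma dP_mul_of_norm_eq_one {w ξ : ℂ} (hw : ‖w‖ = 1) (hξ : ‖ξ‖ < 1) :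
    dP ξ (w * ξ) = 2 * Real.arsinh (‖1 - w‖ * ‖ξ‖ / (1 - ‖ξ‖ ^ 2)) := by
  have hδ : 0 < 1 - ‖ξ‖ ^ 2 := by nlinarith [norm_nonneg ξ]
  have hnum : ‖ξ - w * ξ‖ = ‖1 - w‖ * ‖ξ‖ := by rw [← norm_mul, sub_mul, one_mul]
  have hden : ‖1 - conj (w * ξ) * ξ‖ = √((1 - ‖ξ‖ ^ 2) ^ 2 + (‖1 - w‖ * ‖ξ‖) ^ 2) := by
    rw [← norm_one_sub_conj_mul_mul_self_sq hw, Real.sqrt_sq (norm_nonneg _)]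
  rw [dP, hnum, hden, artanh_div_sqrt_sq_add_sq hδ]

lemma Real.two_mul_arsinh_mem_Icc {x : ℝ} (hx₀ : 0 ≤ x) (hx₁ : x ≤ 1) :
    2 * Real.arsinh x ∈ Set.Icc x (2 * x) := by
  have hlower := Real.sub_sq_div_two_le_arsinh x
  have hupper := Real.arsinh_le_self hx₀
  constructor <;> nlinarith

lemma norm_one_sub_exp_mul_I (θ : ℝ) :
    ‖1 - Complex.exp (θ * Complex.I)‖ = 2 * |Real.sin (θ / 2)| := by
  rw [norm_sub_rev, mul_comm, Complex.norm_exp_I_mul_ofReal_sub_one, norm_mul, Real.norm_two,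
    Real.norm_eq_abs]

theorem stmt_9 :
    ∃ ε₀ ∈ Set.Ioo (0 : ℝ) 1, ∀ ε₁ ε₂ : ℝ, 0 < ε₁ → ε₁ ≤ ε₂ / 16 → ε₂ ≤ ε₀ →
      ∀ θ : ℝ, ∀ ξ : ℂ, ‖ξ‖ < 1 → 1 / 4 ≤ ‖ξ‖ →
        8 * ε₂⁻¹ * |Real.sin (θ / 2)| ≤ 1 - ‖ξ‖ ^ 2 →
        1 - ‖ξ‖ ^ 2 ≤ (1 / 2) * ε₁⁻¹ * |Real.sin (θ / 2)| →
        dP ξ (Complex.exp (θ * Complex.I) * ξ) ∈ Set.Icc ε₁ ε₂ := by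
  refine ⟨1 / 2, ⟨by norm_num, by norm_num⟩, fun ε₁ ε₂ hε₁ h₁₂ hε₂ θ ξ hξ hξ₄ hlow hhigh ↦ ?_⟩
  have hδ : 0 < 1 - ‖ξ‖ ^ 2 := by nlinarith [norm_nonneg ξ]
  have hε₂₀ : 0 < ε₂ := by linarith
  rw [dP_mul_of_norm_eq_one (by simp) hξ, norm_one_sub_exp_mul_I]
  set x := 2 * |Real.sin (θ / 2)| * ‖ξ‖ / (1 - ‖ξ‖ ^ 2)
  have hsin_le : 8 * |Real.sin (θ / 2)| ≤ ε₂ * (1 - ‖ξ‖ ^ 2) := by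
    rwa [mul_comm 8, mul_assoc, inv_mul_le_iff₀ hε₂₀] at hlow
  have hsin_ge : 2 * ε₁ * (1 - ‖ξ‖ ^ 2) ≤ |Real.sin (θ / 2)| := by
    calc 2 * ε₁ * (1 - ‖ξ‖ ^ 2) ≤ 2 * ε₁ * (1 / 2 * ε₁⁻¹ * |Real.sin (θ / 2)|) := by gcongr
      _ = |Real.sin (θ / 2)| := by field_simp
  have hx_le : x ≤ ε₂ / 4 := by
    rw [div_le_iff₀ hδ]
    nlinarith [abs_nonneg (Real.sin (θ / 2))]
  have hle_x : ε₁ ≤ x := by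
    rw [le_div_iff₀ hδ]
    nlinarith [mul_le_mul hsin_ge hξ₄ (by norm_num) (abs_nonneg _)]
  obtain ⟨hx_le_d, hd_le⟩ := Real.two_mul_arsinh_mem_Icc (hε₁.le.trans hle_x) (by linarith)
  exact ⟨hle_x.trans hx_le_d, hd_le.trans (by linarith)⟩
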